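/- arXiv:2006.11954 — 5 statements merged into one kernel-verified Lean document; each statement's English description precedes it below -/
import Mathlib

section
/- Let X be a Banach space and (x_n*) a semi-normalized sequence in the dual X* that converges to 0 in the weak* topology. Then there exists a subsequence (y_n*) of (x_n*) and a bounded sequence (y_n) in X such that y_i*(y_j) = δ_{ij} for all i, j ≥ 1 (i.e., y_i*(y_j) = 1 if i = j and 0 otherwise). -/
/-!
Passing to a subsequence, one builds vectors `uⱼ` with `‖uⱼ‖ ≤ 4/a` and functionals
`fⱼ = x_{φ j}` such that `fⱼ uⱼ = 1`, `fᵢ uⱼ = 0` for `i < j`, and `∑_{k<i} |fᵢ uₖ| ≤ 2⁻ⁱ`.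
The new functional is chosen far out in the sequence: weak*-nullity makes it small on the
finitely many earlier vectors, and, with the norm bounds, keeps it at distance `≥ a/3` from the
finite-dimensional span of the earlier functionals. By Hahn–Banach that distance is at most the
norm of its restriction to the common kernel of the earlier functionals, which provides `uⱼ`.
The matrix `(fᵢ uₖ)` is then lower unitriangular with small rows, so its inverse `C` is bounded
with summable columns, and `yⱼ = ∑ₖ C k j • uₖ` is the required biorthogonal sequence.
-/

open Filter Finset Topology

section Unitriangular

variable {R : Type*}

/-- The inverse of a lower unitriangular matrix `A` (its entries above the diagonal are ignored),
by forward substitution in `∑_{k ≤ i} A i k * C k j = δᵢⱼ`. -/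
noncomputable def unitriangularInv [Ring R] (A : ℕ → ℕ → R) : ℕ → ℕ → R
  | i, j =>
    if i = j then 1
    else if i < j then 0
    else -∑ k : Fin i, A i k * unitriangularInv A k j
  termination_by i _ => i
  decreasing_by exact k.isLt

section Ring

variable [Ring R] (A : ℕ → ℕ → R)

@[simp]
theorem unitriangularInv_self (i : ℕ) : unitriangularInv A i i = 1 := by
  rw [unitriangularInv]; simp

theorem unitriangularInv_of_lt {i j : ℕ} (h : i < j) : unitriangularInv A i j = 0 := by
  rw [unitriangularInv]; simp [h.ne, h]

theorem unitriangularInv_of_gt {i j : ℕ} (h : j < i) :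
    unitriangularInv A i j = -∑ k ∈ range i, A i k * unitriangularInv A k j := by
  rw [unitriangularInv, if_neg h.ne', if_neg h.not_gt,
    Fin.sum_univ_eq_sum_range (fun k => A i k * unitriangularInv A k j)]

theorem sum_mul_unitriangularInv (hA : ∀ i, A i i = 1) (i j : ℕ) :
    ∑ k ∈ range (i + 1), A i k * unitriangularInv A k j = if i = j then 1 else 0 := by
  rw [sum_range_succ, hA, one_mul]
  rcases lt_trichotomy i j with h | rfl | h
  · rw [unitriangularInv_of_lt A h, if_neg h.ne, add_zero]
    exact sum_eq_zero fun k hk => by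
      rw [unitriangularInv_of_lt A ((mem_range.1 hk).trans h), mul_zero]
  · rw [unitriangularInv_self, if_pos rfl, add_eq_right]
    exact sum_eq_zero fun k hk => by rw [unitriangularInv_of_lt A (mem_range.1 hk), mul_zero]
  · rw [unitriangularInv_of_gt A h, if_neg h.ne', add_neg_cancel]

end Ring

section Normed

variable [NormedRing R] {A : ℕ → ℕ → R} {ε : ℕ → ℝ}

theorem norm_unitriangularInv_le_of_gt (hA : ∀ i, ∑ k ∈ range i, ‖A i k‖ ≤ ε i) {i j : ℕ}
    (hC : ∀ k < i, ‖unitriangularInv A k j‖ ≤ 1) (h : j < i) :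
    ‖unitriangularInv A i j‖ ≤ ε i := by
  rw [unitriangularInv_of_gt A h, norm_neg]
  calc ‖∑ k ∈ range i, A i k * unitriangularInv A k j‖
      ≤ ∑ k ∈ range i, ‖A i k‖ * ‖unitriangularInv A k j‖ :=
        norm_sum_le_of_le _ fun k _ => norm_mul_le _ _
    _ ≤ ∑ k ∈ range i, ‖A i k‖ :=
        sum_le_sum fun k hk => mul_le_of_le_one_right (norm_nonneg _) (hC k (mem_range.1 hk))
    _ ≤ ε i := hA i

theorem norm_unitriangularInv_le_one [NormOneClass R] (hA : ∀ i, ∑ k ∈ range i, ‖A i k‖ ≤ ε i)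
    (hε : ∀ i, ε i ≤ 1) (i j : ℕ) : ‖unitriangularInv A i j‖ ≤ 1 := by
  induction i using Nat.strong_induction_on with
  | _ i ih =>
    rcases lt_trichotomy i j with h | rfl | h
    · simp [unitriangularInv_of_lt A h]
    · simp
    · exact (norm_unitriangularInv_le_of_gt hA ih h).trans (hε i)

theorem norm_unitriangularInv_le [NormOneClass R] (hA : ∀ i, ∑ k ∈ range i, ‖A i k‖ ≤ ε i)
    (hε : ∀ i, ε i ≤ 1) (i j : ℕ) :
    ‖unitriangularInv A i j‖ ≤ ε i + if i = j then 1 else 0 := by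
  have hε0 : 0 ≤ ε i := (sum_nonneg fun k _ => norm_nonneg _).trans (hA i)
  rcases lt_trichotomy i j with h | rfl | h
  · simpa [unitriangularInv_of_lt A h, h.ne] using hε0
  · simpa using hε0
  · rw [if_neg h.ne', add_zero]
    exact norm_unitriangularInv_le_of_gt hA
      (fun k _ => norm_unitriangularInv_le_one hA hε k j) h

end Normed

end Unitriangular

noncomputable def seqOfHistory {α : Type*} (g : (n : ℕ) → (Fin n → α) → α) : ℕ → α
  | n => g n fun i => seqOfHistory g i

theorem exists_seq_of_forall_fin_exists {α : Type*} (P : (n : ℕ) → (Fin n → α) → α → Prop)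
    (h : ∀ n s, ∃ a, P n s a) : ∃ f : ℕ → α, ∀ n, P n (fun i => f i) (f n) := by
  choose g hg using h
  exact ⟨seqOfHistory g, fun n => by rw [seqOfHistory]; exact hg n _⟩

theorem ContinuousLinearMap.norm_le_of_tendsto_apply {𝕜 E F : Type*}
    [NontriviallyNormedField 𝕜] [SeminormedAddCommGroup E] [NormedSpace 𝕜 E]
    [SeminormedAddCommGroup F] [NormedSpace 𝕜 F]
    {ι : Type*} {l : Filter ι} [l.NeBot] {z : ι → E →L[𝕜] F} {g : E →L[𝕜] F} {r : ℝ}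
    (hz : ∀ w, Tendsto (fun k => z k w) l (𝓝 (g w))) (hr : ∀ k, ‖z k‖ ≤ r) : ‖g‖ ≤ r := by
  obtain ⟨k₀⟩ := nonempty_of_neBot l
  refine g.opNorm_le_bound ((norm_nonneg _).trans (hr k₀)) fun w =>
    le_of_tendsto (hz w).norm (Eventually.of_forall fun k => ?_)
  exact (z k).le_of_opNorm_le (hr k) w

section WeakStarNull

variable {𝕜 X : Type*} [RCLike 𝕜] [NormedAddCommGroup X] [NormedSpace 𝕜 X]

theorem exists_apply_eq_one_norm_le_inv (f : StrongDual 𝕜 X) {r : ℝ} (hr : 0 < r)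
    (hf : r < ‖f‖) : ∃ u, f u = 1 ∧ ‖u‖ ≤ r⁻¹ := by
  obtain ⟨w, hw, hfw⟩ := f.exists_lt_apply_of_lt_opNorm hf
  have hfw0 : f w ≠ 0 := norm_pos_iff.1 (hr.trans hfw)
  refine ⟨(f w)⁻¹ • w, by simp [hfw0], ?_⟩
  rw [norm_smul, norm_inv, inv_mul_le_iff₀ (hr.trans hfw)]
  calc ‖w‖ ≤ 1 := hw.le
    _ = r * r⁻¹ := (mul_inv_cancel₀ hr.ne').symm
    _ ≤ ‖f w‖ * r⁻¹ := by gcongr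

theorem exists_mem_span_norm_sub_le_norm_comp_subtypeL {ι : Type*} [Fintype ι]
    (L : ι → StrongDual 𝕜 X) (f : StrongDual 𝕜 X) :
    ∃ g ∈ Submodule.span 𝕜 (Set.range L),
      ‖f - g‖ ≤ ‖f.comp (⨅ i, LinearMap.ker (L i : X →ₗ[𝕜] 𝕜)).subtypeL‖ := by
  set N := ⨅ i, LinearMap.ker (L i : X →ₗ[𝕜] 𝕜)
  obtain ⟨h, hh, hnorm⟩ := exists_extension_norm_eq N (f.comp N.subtypeL)
  refine ⟨f - h, ?_, by rw [sub_sub_cancel, hnorm]⟩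
  have hker : N ≤ LinearMap.ker ((f - h : StrongDual 𝕜 X) : X →ₗ[𝕜] 𝕜) :=
    fun w hw => by simpa [sub_eq_zero] using (hh ⟨w, hw⟩).symm
  obtain ⟨c, hc⟩ :=
    (Submodule.mem_span_range_iff_exists_fun 𝕜).1 (mem_span_of_iInf_ker_le_ker hker)
  refine (Submodule.mem_span_range_iff_exists_fun 𝕜).2 ⟨c, ContinuousLinearMap.coe_injective ?_⟩
  simpa using hc

variable {x : ℕ → StrongDual 𝕜 X} {a b : ℝ}

theorem eventually_le_norm_sub_of_finiteDimensional
    (hnull : ∀ v, Tendsto (fun n => x n v) atTop (𝓝 0))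
    (hlow : ∀ n, a ≤ ‖x n‖) (hup : ∀ n, ‖x n‖ ≤ b)
    (F : Submodule 𝕜 (StrongDual 𝕜 X)) [FiniteDimensional 𝕜 F] {r : ℝ} (hr : 2 * r < a) :
    ∀ᶠ n in atTop, ∀ g ∈ F, r ≤ ‖x n - g‖ := by
  by_contra h
  simp only [not_eventually, not_forall, not_le, exists_prop] at h
  obtain ⟨ψ, hψ, hψF⟩ := extraction_of_frequently_atTop h
  choose g hgF hg using hψF
  have hgb : ∀ k, (⟨g k, hgF k⟩ : F) ∈ Metric.closedBall 0 (b + r) := fun k => by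
    rw [mem_closedBall_zero_iff (E := F), Submodule.coe_norm]
    linarith [norm_le_norm_add_norm_sub' (g k) (x (ψ k)), norm_sub_rev (g k) (x (ψ k)),
      hup (ψ k), hg k]
  obtain ⟨g₀, -, ρ, hρ, hlim⟩ := tendsto_subseq_of_bounded Metric.isBounded_closedBall hgb
  have hlim' : Tendsto (fun l => g (ρ l)) atTop (𝓝 (g₀ : StrongDual 𝕜 X)) :=
    (continuous_subtype_val.tendsto g₀).comp hlim
  -- `g₀` is also the weak*-limit of `g (ρ l) - x (ψ (ρ l))`, whose norms are `< r`.
  have hsmall : ‖(g₀ : StrongDual 𝕜 X)‖ ≤ r := by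
    refine ContinuousLinearMap.norm_le_of_tendsto_apply (l := atTop)
      (z := fun l => g (ρ l) - x (ψ (ρ l))) (fun w => ?_)
      fun l => by rw [norm_sub_rev]; exact (hg (ρ l)).le
    simpa using (((ContinuousLinearMap.apply 𝕜 𝕜 w).continuous.tendsto _).comp hlim').sub
      ((hnull w).comp (hψ.comp hρ).tendsto_atTop)
  have hlarge : a - r ≤ ‖(g₀ : StrongDual 𝕜 X)‖ :=
    ge_of_tendsto hlim'.norm (Eventually.of_forall fun l => by
      linarith [hlow (ψ (ρ l)), norm_le_norm_add_norm_sub' (x (ψ (ρ l))) (g (ρ l)), hg (ρ l)])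
  linarith

theorem exists_apply_eq_one_of_weakStarNull
    (hnull : ∀ v, Tendsto (fun n => x n v) atTop (𝓝 0)) (ha : 0 < a)
    (hlow : ∀ n, a ≤ ‖x n‖) (hup : ∀ n, ‖x n‖ ≤ b)
    {ι : Type*} [Fintype ι] (m : ι → ℕ) (v : ι → X) {ε : ℝ} (hε : 0 < ε) :
    ∃ n u, (∀ i, m i < n ∧ x (m i) u = 0) ∧ ∑ i, ‖x n (v i)‖ ≤ ε ∧
      x n u = 1 ∧ ‖u‖ ≤ 4 / a := by
  set F := Submodule.span 𝕜 (Set.range fun i => x (m i))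
  have : FiniteDimensional 𝕜 F := FiniteDimensional.span_of_finite 𝕜 (Set.finite_range _)
  have hfar := eventually_le_norm_sub_of_finiteDimensional hnull hlow hup F (r := a / 3)
    (by linarith)
  have hsmall : ∀ᶠ n in atTop, ∑ i, ‖x n (v i)‖ ≤ ε := by
    have : Tendsto (fun n => ∑ i, ‖x n (v i)‖) atTop (𝓝 0) := by
      simpa using tendsto_finsetSum univ fun i _ => (hnull (v i)).norm
    exact this.eventually_le_const hε
  have hlate : ∀ᶠ n in atTop, ∀ i, m i < n := eventually_all.2 fun i => eventually_gt_atTop _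
  obtain ⟨n, hnfar, hnsmall, hnlate⟩ := (hfar.and (hsmall.and hlate)).exists
  obtain ⟨g, hg, hng⟩ := exists_mem_span_norm_sub_le_norm_comp_subtypeL (fun i => x (m i)) (x n)
  obtain ⟨u, hu, hnorm⟩ := exists_apply_eq_one_norm_le_inv
    ((x n).comp (⨅ i, LinearMap.ker (x (m i) : X →ₗ[𝕜] 𝕜)).subtypeL) (r := a / 4)
    (by positivity) (by linarith [hnfar g hg])
  refine ⟨n, u, fun i => ⟨hnlate i, (Submodule.mem_iInf _).1 u.2 i⟩, hnsmall, hu, ?_⟩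
  simpa [inv_div] using hnorm

theorem exists_strictMono_almost_biorthogonal
    (hnull : ∀ v, Tendsto (fun n => x n v) atTop (𝓝 0)) (ha : 0 < a)
    (hlow : ∀ n, a ≤ ‖x n‖) (hup : ∀ n, ‖x n‖ ≤ b) {ε : ℕ → ℝ} (hε : ∀ i, 0 < ε i) :
    ∃ φ : ℕ → ℕ, StrictMono φ ∧ ∃ u : ℕ → X, (∀ j, x (φ j) (u j) = 1) ∧ (∀ j, ‖u j‖ ≤ 4 / a) ∧
      (∀ i j, i < j → x (φ i) (u j) = 0) ∧ ∀ i, ∑ k ∈ range i, ‖x (φ i) (u k)‖ ≤ ε i := by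
  obtain ⟨p, hp⟩ := exists_seq_of_forall_fin_exists
    (fun j (s : Fin j → ℕ × X) (q : ℕ × X) => (∀ i, (s i).1 < q.1 ∧ x (s i).1 q.2 = 0) ∧
      ∑ i, ‖x q.1 (s i).2‖ ≤ ε j ∧ x q.1 q.2 = 1 ∧ ‖q.2‖ ≤ 4 / a)
    fun j s => by
      obtain ⟨n, u, h⟩ := exists_apply_eq_one_of_weakStarNull hnull ha hlow hup
        (fun i => (s i).1) (fun i => (s i).2) (hε j)
      exact ⟨(n, u), h⟩
  refine ⟨fun j => (p j).1, fun i j hij => ((hp j).1 ⟨i, hij⟩).1, fun j => (p j).2,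
    fun j => (hp j).2.2.1, fun j => (hp j).2.2.2, fun i j hij => ((hp j).1 ⟨i, hij⟩).2,
    fun i => ?_⟩
  simpa only [Fin.sum_univ_eq_sum_range (fun k => ‖x (p i).1 (p k).2‖) i] using (hp i).2.1

theorem exists_biorthogonal_of_unitriangular [CompleteSpace X] (f : ℕ → StrongDual 𝕜 X)
    (u : ℕ → X) {M : ℝ} {ε : ℕ → ℝ} (hε : Summable ε) (hε1 : ∀ i, ε i ≤ 1)
    (hdiag : ∀ i, f i (u i) = 1) (hupper : ∀ i j, i < j → f i (u j) = 0)
    (hlower : ∀ i, ∑ k ∈ range i, ‖f i (u k)‖ ≤ ε i) (hu : ∀ k, ‖u k‖ ≤ M) :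
    ∃ y : ℕ → X, (∀ j, ‖y j‖ ≤ (∑' i, ε i + 1) * M) ∧
      ∀ i j, f i (y j) = if i = j then 1 else 0 := by
  set C := unitriangularInv fun i k => f i (u k)
  have hbound : ∀ j k, ‖C k j • u k‖ ≤ (ε k + if k = j then 1 else 0) * M := fun j k => by
    have hε0 : 0 ≤ ε k := (sum_nonneg fun _ _ => norm_nonneg _).trans (hlower k)
    rw [norm_smul]
    exact mul_le_mul (norm_unitriangularInv_le hlower hε1 k j) (hu k) (norm_nonneg _)
      (by split_ifs <;> linarith)
  have hmajor : ∀ j, HasSum (fun k => (ε k + if k = j then 1 else 0) * M)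
      ((∑' i, ε i + 1) * M) :=
    fun j => (hε.hasSum.add (hasSum_ite_eq j 1)).mul_right M
  refine ⟨fun j => ∑' k, C k j • u k, fun j => tsum_of_norm_bounded (hmajor j) (hbound j),
    fun i j => ?_⟩
  calc f i (∑' k, C k j • u k) = ∑' k, f i (u k) * C k j := by
        rw [(f i).map_tsum ((hmajor j).summable.of_norm_bounded (hbound j))]
        simp [mul_comm]
    _ = ∑ k ∈ range (i + 1), f i (u k) * C k j := tsum_eq_sum fun k hk => by
        rw [hupper i k (by simpa using hk), zero_mul]
    _ = if i = j then 1 else 0 := sum_mul_unitriangularInv (fun i k => f i (u k)) hdiag i j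

end WeakStarNull

/-- **Johnson–Rosenthal.** If `(xₙ*)` is a semi-normalized weak*-null sequence in the
dual of a Banach space `X`, then there is a subsequence `(yₙ*)` and a bounded sequence
`(yₙ)` in `X` with `yᵢ*(yⱼ) = δᵢⱼ`. -/
theorem weak_star_null_biorthogonal_subsequence
    (X : Type*) [NormedAddCommGroup X] [NormedSpace ℂ X] [CompleteSpace X]
    (x : ℕ → StrongDual ℂ X)
    (hlow : ∃ a : ℝ, 0 < a ∧ ∀ n, a ≤ ‖x n‖)
    (hup : ∃ b : ℝ, ∀ n, ‖x n‖ ≤ b)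
    (hnull : ∀ v : X, Tendsto (fun n => x n v) atTop (nhds 0)) :
    ∃ φ : ℕ → ℕ, StrictMono φ ∧
      ∃ y : ℕ → X, (∃ C : ℝ, ∀ n, ‖y n‖ ≤ C) ∧
        ∀ i j, x (φ i) (y j) = if i = j then 1 else 0 := by
  obtain ⟨a, ha, hlow⟩ := hlow
  obtain ⟨b, hup⟩ := hup
  obtain ⟨φ, hφ, u, hdiag, hu, hupper, hlower⟩ := exists_strictMono_almost_biorthogonal hnull ha
    hlow hup (ε := fun i => (1 / 2 : ℝ) ^ i) fun i => by positivity
  obtain ⟨y, hy, hxy⟩ := exists_biorthogonal_of_unitriangular (fun i => x (φ i)) u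
    summable_geometric_two (fun i => pow_le_one₀ (by norm_num) (by norm_num)) hdiag hupper hlower hu
  exact ⟨φ, hφ, y, ⟨_, hy⟩, hxy⟩
end

section
/- Let X be a complex Banach space, T a bounded linear operator on X, Y a half-space of X, and k a natural number. Then there exists a finite-dimensional subspace E of X with dim E ≤ k and T(Y) ⊆ Y + E if and only if there exists a bounded operator F on X of rank at most k such that (T + F)(Y) ⊆ Y. -/
/-!
Let `q : X → X ⧸ Y` be the quotient map. If `T(Y) ⊆ Y + E`, then `q ∘ T` maps `Y` into the
finite-dimensional subspace `q(E)`. By Hahn–Banach `q(E)` is complemented in `X ⧸ Y`; composing a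
continuous projection onto `q(E)` with a linear lift `q(E) → E` gives `G : X ⧸ Y →L X` with range
in `E` and `q ∘ G = id` on `q(E)`. Then `F = -G ∘ q ∘ T` has rank at most `dim E` and
`q ∘ (T + F)` vanishes on `Y`. Conversely, `T y = (T + F) y - F y` shows that `E = range F` works.
-/

open ContinuousLinearMap

namespace Submodule

variable {𝕜 X : Type*} [RCLike 𝕜] [NormedAddCommGroup X] [NormedSpace 𝕜 X]
  (Y : Submodule 𝕜 X) [IsClosed (Y : Set X)] (E : Submodule 𝕜 X) [FiniteDimensional 𝕜 E]

theorem exists_continuous_section_mkQ_of_finiteDimensional :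
    ∃ G : X ⧸ Y →L[𝕜] X, (G : X ⧸ Y →ₗ[𝕜] X).range ≤ E ∧
      ∀ x ∈ E, Y.mkQ (G (Y.mkQ x)) = Y.mkQ x := by
  obtain ⟨P, hP⟩ := ClosedComplemented.of_finiteDimensional (E.map Y.mkQ)
  obtain ⟨L, hL⟩ := (Y.mkQ.submoduleMap E).exists_rightInverse_of_surjective
    (LinearMap.range_eq_top.mpr (Y.mkQ.submoduleMap_surjective E))
  refine ⟨E.subtypeL.comp (L.toContinuousLinearMap.comp P), ?_, fun x hx => ?_⟩
  · rintro _ ⟨q, rfl⟩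
    exact (L (P q)).2
  · have hx' : Y.mkQ x ∈ E.map Y.mkQ := mem_map_of_mem hx
    have hPx : P (Y.mkQ x) = ⟨Y.mkQ x, hx'⟩ := hP ⟨_, hx'⟩
    change Y.mkQ (L (P (Y.mkQ x)) : X) = Y.mkQ x
    rw [hPx]
    exact congr_arg Subtype.val (LinearMap.congr_fun hL ⟨Y.mkQ x, hx'⟩)

variable {Y E}

theorem exists_range_le_forall_add_mem_of_forall_mem_sup (T : X →L[𝕜] X)
    (hT : ∀ y ∈ Y, T y ∈ Y ⊔ E) :
    ∃ F : X →L[𝕜] X, (F : X →ₗ[𝕜] X).range ≤ E ∧ ∀ y ∈ Y, (T + F) y ∈ Y := by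
  obtain ⟨G, hGE, hG⟩ := Y.exists_continuous_section_mkQ_of_finiteDimensional E
  refine ⟨-(G.comp (Y.mkQL.comp T)), ?_, fun y hy => ?_⟩
  · rintro _ ⟨x, rfl⟩
    exact E.neg_mem (hGE ⟨_, rfl⟩)
  · obtain ⟨a, ha, c, hc, hac⟩ := mem_sup.mp (hT y hy)
    have hTy : Y.mkQ (T y) = Y.mkQ c := by
      rw [← hac, map_add, (Y.mkQ_apply a).trans ((Quotient.mk_eq_zero Y).mpr ha), zero_add]
    rw [← Quotient.mk_eq_zero Y, ← mkQ_apply]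
    simp only [add_apply, neg_apply, comp_apply, coe_mkQL, map_add, map_neg, hTy, hG c hc,
      add_neg_cancel]

end Submodule

theorem LinearMap.mem_sup_range_of_add_apply_mem {R M : Type*} [Ring R] [AddCommGroup M]
    [Module R M] {Y : Submodule R M} {T F : M →ₗ[R] M} {y : M} (h : (T + F) y ∈ Y) :
    T y ∈ Y ⊔ F.range := by
  rw [show T y = (T + F) y + -F y by simp]
  exact Submodule.add_mem_sup h (neg_mem (mem_range_self F y))

theorem almost_invariant_iff_perturbation_invariant_general
    (X : Type*) [NormedAddCommGroup X] [NormedSpace ℂ X]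
    (T : X →L[ℂ] X) (Y : Submodule ℂ X)
    (hYclosed : IsClosed (Y : Set X))
    (k : ℕ) :
    (∃ E : Submodule ℂ X, FiniteDimensional ℂ E ∧ Module.finrank ℂ E ≤ k ∧
        ∀ y ∈ Y, T y ∈ Y ⊔ E) ↔
    (∃ F : X →L[ℂ] X, Module.rank ℂ (LinearMap.range (F : X →ₗ[ℂ] X)) ≤ k ∧
        ∀ y ∈ Y, (T + F) y ∈ Y) := by
  constructor
  · rintro ⟨E, hE, hEk, hTE⟩
    have := hYclosed
    obtain ⟨F, hFE, hF⟩ := Submodule.exists_range_le_forall_add_mem_of_forall_mem_sup T hTE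
    refine ⟨F, (Submodule.rank_mono hFE).trans ?_, hF⟩
    rw [← Module.finrank_eq_rank]
    exact_mod_cast hEk
  · rintro ⟨F, hFk, hF⟩
    have : FiniteDimensional ℂ (F : X →ₗ[ℂ] X).range :=
      Module.rank_lt_aleph0_iff.mp (hFk.trans_lt (Cardinal.natCast_lt_aleph0))
    exact ⟨_, this, Module.finrank_le_of_rank_le hFk,
      fun y hy => LinearMap.mem_sup_range_of_add_apply_mem (hF y hy)⟩

/-- A half-space `Y` is almost-invariant for `T` with defect at most `k` if and only
if `Y` is invariant for some rank at most `k` perturbation `T + F` of `T`. -/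
theorem almost_invariant_iff_perturbation_invariant
    (X : Type*) [NormedAddCommGroup X] [NormedSpace ℂ X] [CompleteSpace X]
    (T : X →L[ℂ] X) (Y : Submodule ℂ X)
    (hYclosed : IsClosed (Y : Set X))
    (hYinf : ¬ FiniteDimensional ℂ Y)
    (hYcoinf : ¬ FiniteDimensional ℂ (X ⧸ Y))
    (k : ℕ) :
    (∃ E : Submodule ℂ X, FiniteDimensional ℂ E ∧ Module.finrank ℂ E ≤ k ∧
        ∀ y ∈ Y, T y ∈ Y ⊔ E) ↔
    (∃ F : X →L[ℂ] X, Module.rank ℂ (LinearMap.range (F : X →ₗ[ℂ] X)) ≤ k ∧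
        ∀ y ∈ Y, (T + F) y ∈ Y) :=
  almost_invariant_iff_perturbation_invariant_general X T Y hYclosed k
end

section
/- Let X be a complex Banach space and T a bounded linear operator on X. Suppose there is an infinite set Λ of complex numbers such that every λ ∈ Λ is simultaneously an eigenvalue of T and an eigenvalue of the adjoint T*. Then T has an invariant half-space, i.e., a closed subspace of infinite dimension and infinite codimension that T maps into itself. -/
/-!
Take an injective sequence `λ₀, λ₁, …` in `Λ`. Eigenvectors of `T` for the even-indexed `λ`'s
span a `T`-invariant subspace whose closure `Y` is again invariant, and infinite dimensional since
eigenvectors for distinct eigenvalues are independent. An eigenfunctional `f` of `T*` for an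
odd-indexed `λ` kills every eigenvector `x` of `T` for a different eigenvalue `μ`, because
`λ f(x) = f(Tx) = μ f(x)`; so infinitely many independent functionals vanish on `Y`, which
makes `X ⧸ Y` infinite dimensional.
-/

open Function Module

section Algebra

variable {R V : Type*} [CommRing R] [IsDomain R] [AddCommGroup V] [Module R V]

theorem Module.End.apply_eq_zero_of_dualMap_apply_eq_smul (T : End R V) {f : Dual R V} {x : V}
    {a b : R} (hx : T x = a • x) (hf : T.dualMap f = b • f) (hab : a ≠ b) : f x = 0 := by
  have key : a * f x = b * f x :=
    calc a * f x = f (T x) := by rw [hx, map_smul, smul_eq_mul]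
      _ = T.dualMap f x := rfl
      _ = b * f x := by rw [hf]; rfl
  by_contra hfx
  exact hab (mul_right_cancel₀ hfx key)

end Algebra

section FiniteDimensional

variable {K V ι : Type*} [Field K] [AddCommGroup V] [Module K V] [Infinite ι]

theorem Submodule.not_finiteDimensional_of_linearIndependent {Y : Submodule K V} {v : ι → V}
    (hv : LinearIndependent K v) (hvY : ∀ i, v i ∈ Y) : ¬FiniteDimensional K Y := fun _ =>
  Module.Finite.not_linearIndependent_of_infinite (fun i => (⟨v i, hvY i⟩ : Y))
    (LinearIndependent.of_comp Y.subtype hv)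

theorem Submodule.not_finiteDimensional_quotient_of_linearIndependent {Y : Submodule K V}
    {f : ι → Dual K V} (hf : LinearIndependent K f) (hfY : ∀ i, f i ∈ Y.dualAnnihilator) :
    ¬FiniteDimensional K (V ⧸ Y) := fun hfin =>
  have : Module.Finite K Y.dualAnnihilator := Submodule.finite_dualAnnihilator_iff.mpr hfin
  Submodule.not_finiteDimensional_of_linearIndependent hf hfY this

end FiniteDimensional

section Topology

variable {𝕜 X : Type*} [Field 𝕜] [AddCommGroup X] [Module 𝕜 X]
  [TopologicalSpace X] [ContinuousAdd X] [ContinuousConstSMul 𝕜 X]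

theorem Submodule.topologicalClosure_le_comap (T : X →L[𝕜] X) {s : Submodule 𝕜 X}
    (hs : s ≤ s.comap (T : X →ₗ[𝕜] X)) :
    s.topologicalClosure ≤ s.topologicalClosure.comap (T : X →ₗ[𝕜] X) :=
  fun _ hy => Set.MapsTo.closure (f := T) hs T.continuous hy

theorem ContinuousLinearMap.exists_invariant_halfspace_of_eigenvectors
    [TopologicalSpace 𝕜] [T1Space 𝕜]
    {ι κ : Type*} [Infinite ι] [Infinite κ] (T : X →L[𝕜] X) {a : ι → 𝕜} {b : κ → 𝕜}
    (ha : Injective a) (hb : Injective b) (hab : ∀ i j, a i ≠ b j) {x : ι → X}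
    (hx : ∀ i, End.HasEigenvector (T : End 𝕜 X) (a i) (x i)) {f : κ → X →L[𝕜] 𝕜}
    (hf : ∀ j, End.HasEigenvector (T : End 𝕜 X).dualMap (b j) (f j : X →ₗ[𝕜] 𝕜)) :
    ∃ Y : Submodule 𝕜 X, IsClosed (Y : Set X) ∧
      ¬FiniteDimensional 𝕜 Y ∧ ¬FiniteDimensional 𝕜 (X ⧸ Y) ∧ ∀ y ∈ Y, T y ∈ Y := by
  set S := Submodule.span 𝕜 (Set.range x)
  have hxS : ∀ i, x i ∈ S.topologicalClosure := fun i =>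
    S.le_topologicalClosure (Submodule.subset_span ⟨i, rfl⟩)
  have hS_inv : S ≤ S.comap (T : X →ₗ[𝕜] X) := by
    rw [Submodule.span_le]
    rintro _ ⟨i, rfl⟩
    have hTx : T (x i) = a i • x i := (hx i).apply_eq_smul
    simpa [hTx] using S.smul_mem (a i) (Submodule.subset_span ⟨i, rfl⟩)
  have hfY : ∀ j, (f j : Dual 𝕜 X) ∈ S.topologicalClosure.dualAnnihilator := by
    refine fun j => (Submodule.mem_dualAnnihilator _).mpr fun y hy => ?_
    refine S.topologicalClosure_minimal (t := LinearMap.ker (f j : X →ₗ[𝕜] 𝕜)) ?_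
      (f j).isClosed_ker hy
    rw [Submodule.span_le]
    rintro _ ⟨i, rfl⟩
    exact End.apply_eq_zero_of_dualMap_apply_eq_smul _ (hx i).apply_eq_smul
      (hf j).apply_eq_smul (hab i j)
  exact ⟨S.topologicalClosure, S.isClosed_topologicalClosure,
    Submodule.not_finiteDimensional_of_linearIndependent
      (End.eigenvectors_linearIndependent' _ a ha x hx) hxS,
    Submodule.not_finiteDimensional_quotient_of_linearIndependent
      (End.eigenvectors_linearIndependent' _ b hb _ hf) hfY,
    fun y hy => Submodule.topologicalClosure_le_comap T hS_inv hy⟩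

end Topology

theorem invariant_halfspace_of_infinitely_many_common_eigenvalues_general
    (X : Type*) [NormedAddCommGroup X] [NormedSpace ℂ X]
    (T : X →L[ℂ] X) (Λ : Set ℂ) (hΛ : Λ.Infinite)
    (heig : ∀ l ∈ Λ, (∃ x : X, x ≠ 0 ∧ T x = l • x) ∧
      (∃ f : StrongDual ℂ X, f ≠ 0 ∧ f.comp T = l • f)) :
    ∃ Y : Submodule ℂ X, IsClosed (Y : Set X) ∧
      ¬ FiniteDimensional ℂ Y ∧ ¬ FiniteDimensional ℂ (X ⧸ Y) ∧
      ∀ y ∈ Y, T y ∈ Y := by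
  set e := Set.Infinite.natEmbedding Λ hΛ
  set l : ℕ → ℂ := fun n => e n
  have hl : Injective l := fun m n h => e.injective (Subtype.ext h)
  choose x hx0 hTx using fun n => (heig (l n) (e n).2).1
  choose f hf0 hTf using fun n => (heig (l n) (e n).2).2
  have hx : ∀ n, End.HasEigenvector (T : End ℂ X) (l n) (x n) := fun n =>
    ⟨End.mem_eigenspace_iff.mpr (hTx n), hx0 n⟩
  have hf : ∀ n, End.HasEigenvector (T : End ℂ X).dualMap (l n) (f n : X →ₗ[ℂ] ℂ) := fun n =>
    ⟨End.mem_eigenspace_iff.mpr (congrArg ContinuousLinearMap.toLinearMap (hTf n)),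
      fun h => hf0 n (ContinuousLinearMap.coe_injective h)⟩
  exact T.exists_invariant_halfspace_of_eigenvectors (a := fun n => l (2 * n))
    (b := fun n => l (2 * n + 1)) (fun m n h => by have := hl h; omega)
    (fun m n h => by have := hl h; omega) (fun m n h => by have := hl h; omega)
    (fun n => hx (2 * n)) (fun n => hf (2 * n + 1))

/-- If infinitely many complex numbers are simultaneously eigenvalues of `T` and of
its Banach-space adjoint `T*`, then `T` itself has an invariant half-space. -/
theorem invariant_halfspace_of_infinitely_many_common_eigenvalues
    (X : Type*) [NormedAddCommGroup X] [NormedSpace ℂ X] [CompleteSpace X]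
    (T : X →L[ℂ] X) (Λ : Set ℂ) (hΛ : Λ.Infinite)
    (heig : ∀ l ∈ Λ, (∃ x : X, x ≠ 0 ∧ T x = l • x) ∧
      (∃ f : StrongDual ℂ X, f ≠ 0 ∧ f.comp T = l • f)) :
    ∃ Y : Submodule ℂ X, IsClosed (Y : Set X) ∧
      ¬ FiniteDimensional ℂ Y ∧ ¬ FiniteDimensional ℂ (X ⧸ Y) ∧
      ∀ y ∈ Y, T y ∈ Y :=
  invariant_halfspace_of_infinitely_many_common_eigenvalues_general X T Λ hΛ heig
end

section
/- Let X be a complex Banach space and T a bounded linear operator on X that is locally algebraic, i.e., for every x ∈ X there exists a nonzero polynomial p_x with complex coefficients such that p_x(T)x = 0. Then T is algebraic: there exists a nonzero polynomial p such that p(T) = 0. -/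
/-!
For each `n`, the vectors annihilated by a nonzero polynomial of degree at most `n` in `T` form a
closed set: its complement is where `x, T x, …, Tⁿ x` are linearly independent, an open
condition. These sets cover `X`, so by Baire one of them has an interior point `x₀`; writing any
`y` as a multiple of `(x₀ + t • y) - x₀` shows that every vector is annihilated by a nonzero
polynomial of degree at most `2n`.

The rest is linear algebra over an infinite field. Take `x` whose local minimal polynomial `m_x`
has maximal degree. For any `y`, the local minimal polynomials of `x + c • y` are monic divisors
of `m_x m_y`, so two of them, for `c₁ ≠ c₂`, coincide. That common polynomial kills `x` and `y`;
being divisible by `m_x` and of degree at most `deg m_x`, it is `m_x`, so `m_x` kills `y`.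
-/

open Polynomial Filter Topology

theorem ContinuousLinearMap.toLinearMap_aeval {R E : Type*} [CommRing R] [TopologicalSpace R]
    [AddCommGroup E] [Module R E] [TopologicalSpace E] [IsTopologicalAddGroup E]
    [ContinuousConstSMul R E] (T : E →L[R] E) (p : R[X]) :
    ((aeval T p : E →L[R] E) : E →ₗ[R] E) = aeval (T : E →ₗ[R] E) p :=
  (aeval_algHom_apply (⟨toLinearMapRingHom, fun _ => rfl⟩ : (E →L[R] E) →ₐ[R] Module.End R E)
    T p).symm

theorem LinearMap.map_eq_zero_of_map_add_smul_eq_zero {K M N : Type*} [Field K] [AddCommGroup M]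
    [Module K M] [AddCommGroup N] [Module K N] (g : M →ₗ[K] N) {x y : M} {c₁ c₂ : K}
    (hc : c₁ ≠ c₂) (h₁ : g (x + c₁ • y) = 0) (h₂ : g (x + c₂ • y) = 0) : g x = 0 ∧ g y = 0 := by
  rw [map_add, map_smul] at h₁ h₂
  have hy : (c₁ - c₂) • g y = 0 := by linear_combination (norm := module) h₁ - h₂
  rw [smul_eq_zero, sub_eq_zero, or_iff_right hc] at hy
  exact ⟨by simpa [hy] using h₁, hy⟩

namespace Module.End

variable {K M : Type*} [Field K] [AddCommGroup M] [Module K M]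

def localAnnIdeal (f : Module.End K M) (x : M) : Ideal K[X] where
  carrier := {p | aeval f p x = 0}
  add_mem' hp hq := by simp_all
  zero_mem' := by simp
  smul_mem' c p hp := by simp_all [Module.End.mul_apply]

open scoped Classical in
noncomputable def localMinpoly (f : Module.End K M) (x : M) : K[X] :=
  normalize (Submodule.IsPrincipal.generator (f.localAnnIdeal x))

variable {f : Module.End K M} {x y : M} {p : K[X]}

theorem mem_localAnnIdeal : p ∈ f.localAnnIdeal x ↔ aeval f p x = 0 := Iff.rfl

theorem localMinpoly_dvd_iff : f.localMinpoly x ∣ p ↔ aeval f p x = 0 := by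
  classical
  rw [localMinpoly, normalize_dvd_iff, ← Submodule.IsPrincipal.mem_iff_generator_dvd]
  rfl

variable (f x) in
theorem aeval_localMinpoly_apply : aeval f (f.localMinpoly x) x = 0 :=
  localMinpoly_dvd_iff.1 dvd_rfl

theorem localMinpoly_ne_zero (hp : p ≠ 0) (hpx : aeval f p x = 0) : f.localMinpoly x ≠ 0 :=
  ne_zero_of_dvd_ne_zero hp (localMinpoly_dvd_iff.2 hpx)

theorem monic_localMinpoly (hx : f.localMinpoly x ≠ 0) : (f.localMinpoly x).Monic := by
  classical exact monic_normalize (by simpa [localMinpoly] using hx)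

theorem natDegree_localMinpoly_le (hp : p ≠ 0) (hpx : aeval f p x = 0) :
    (f.localMinpoly x).natDegree ≤ p.natDegree :=
  natDegree_le_of_dvd (localMinpoly_dvd_iff.2 hpx) hp

theorem localMinpoly_add_smul_dvd (c : K) :
    f.localMinpoly (x + c • y) ∣ f.localMinpoly x * f.localMinpoly y := by
  have hx : f.localMinpoly x * f.localMinpoly y ∈ f.localAnnIdeal x :=
    Ideal.mul_mem_right _ _ (aeval_localMinpoly_apply f x)
  have hy : f.localMinpoly x * f.localMinpoly y ∈ f.localAnnIdeal y :=
    Ideal.mul_mem_left _ _ (aeval_localMinpoly_apply f y)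
  rw [localMinpoly_dvd_iff, map_add, map_smul, mem_localAnnIdeal.1 hx, mem_localAnnIdeal.1 hy, smul_zero,
    add_zero]

theorem exists_ne_localMinpoly_add_smul_eq [Infinite K] (hx : f.localMinpoly x ≠ 0)
    (hy : f.localMinpoly y ≠ 0) :
    ∃ c₁ c₂ : K, c₁ ≠ c₂ ∧ f.localMinpoly (x + c₁ • y) = f.localMinpoly (x + c₂ • y) := by
  have hxy := mul_ne_zero hx hy
  have hfin : {g : K[X] | g.Monic ∧ g ∣ f.localMinpoly x * f.localMinpoly y}.Finite :=
    Set.finite_coe_iff.1 (@Finite.of_fintype _ (fintypeSubtypeMonicDvd _ hxy))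
  have hmaps : Set.MapsTo (fun c : K => f.localMinpoly (x + c • y)) Set.univ
      {g | g.Monic ∧ g ∣ f.localMinpoly x * f.localMinpoly y} := fun c _ =>
    ⟨monic_localMinpoly (ne_zero_of_dvd_ne_zero hxy (localMinpoly_add_smul_dvd c)),
      localMinpoly_add_smul_dvd c⟩
  obtain ⟨c₁, -, c₂, -, hne, heq⟩ := Set.infinite_univ.exists_ne_map_eq_of_mapsTo hmaps hfin
  exact ⟨c₁, c₂, hne, heq⟩

theorem aeval_localMinpoly_eq_zero_of_forall_natDegree_le [Infinite K]
    (hf : ∀ y, f.localMinpoly y ≠ 0)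
    (hx : ∀ y, (f.localMinpoly y).natDegree ≤ (f.localMinpoly x).natDegree) :
    aeval f (f.localMinpoly x) = 0 := by
  ext y
  obtain ⟨c₁, c₂, hne, heq⟩ := exists_ne_localMinpoly_add_smul_eq (hf x) (hf y)
  obtain ⟨hqx, hqy⟩ := (aeval f (f.localMinpoly (x + c₁ • y))).map_eq_zero_of_map_add_smul_eq_zero
    hne (aeval_localMinpoly_apply f _) (heq ▸ aeval_localMinpoly_apply f (x + c₂ • y))
  have hq : f.localMinpoly (x + c₁ • y) = f.localMinpoly x :=
    eq_of_monic_of_dvd_of_natDegree_le (monic_localMinpoly (hf x)) (monic_localMinpoly (hf _))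
      (localMinpoly_dvd_iff.2 hqx) (hx _)
  rwa [← hq]

def annihilatedByDegreeLE (f : Module.End K M) (n : ℕ) : Set M :=
  {x | ∃ p : K[X], p ≠ 0 ∧ p.natDegree ≤ n ∧ aeval f p x = 0}

theorem aeval_apply_eq_sum_fin {n : ℕ} (hp : p.natDegree ≤ n) (x : M) :
    aeval f p x = ∑ i : Fin (n + 1), p.coeff i • (f ^ (i : ℕ)) x := by
  rw [aeval_eq_sum_range' (Nat.lt_succ_of_le hp), LinearMap.sum_apply,
    ← Fin.sum_univ_eq_sum_range (fun i => (p.coeff i • f ^ i) x)]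
  rfl

theorem not_linearIndependent_pow_apply_iff {n : ℕ} :
    ¬LinearIndependent K (fun i : Fin (n + 1) => (f ^ (i : ℕ)) x) ↔
      x ∈ f.annihilatedByDegreeLE n := by
  rw [Fintype.not_linearIndependent_iff]
  constructor
  · rintro ⟨g, hg, i, hi⟩
    set p : K[X] := ↑((degreeLTEquiv K (n + 1)).symm g)
    have hcoeff (j : Fin (n + 1)) : p.coeff j = g j :=
      congrFun ((degreeLTEquiv K (n + 1)).apply_symm_apply g) j
    have hdeg : p.natDegree ≤ n :=
      natDegree_le_of_degree_le (Order.le_of_lt_succ (mem_degreeLT.1 (Subtype.property _)))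
    refine ⟨p, fun h0 => hi ?_, hdeg, ?_⟩
    · rw [← hcoeff, h0, coeff_zero]
    · simpa only [aeval_apply_eq_sum_fin hdeg, hcoeff] using hg
  · rintro ⟨p, hp, hdeg, hpx⟩
    exact ⟨fun i => p.coeff i, (aeval_apply_eq_sum_fin hdeg x).symm.trans hpx,
      ⟨p.natDegree, Nat.lt_succ_of_le hdeg⟩, mt leadingCoeff_eq_zero.1 hp⟩

theorem sub_mem_annihilatedByDegreeLE {m n : ℕ} (hx : x ∈ f.annihilatedByDegreeLE m)
    (hy : y ∈ f.annihilatedByDegreeLE n) : x - y ∈ f.annihilatedByDegreeLE (m + n) := by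
  obtain ⟨p, hp, hpm, hpx⟩ := hx
  obtain ⟨q, hq, hqn, hqy⟩ := hy
  refine ⟨p * q, mul_ne_zero hp hq, natDegree_mul_le.trans (add_le_add hpm hqn), ?_⟩
  have hpqx : p * q ∈ f.localAnnIdeal x := Ideal.mul_mem_right q _ hpx
  have hpqy : p * q ∈ f.localAnnIdeal y := Ideal.mul_mem_left _ p hqy
  rw [map_sub, mem_localAnnIdeal.1 hpqx, mem_localAnnIdeal.1 hpqy, sub_zero]

theorem smul_mem_annihilatedByDegreeLE {n : ℕ} (c : K) (hx : x ∈ f.annihilatedByDegreeLE n) :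
    c • x ∈ f.annihilatedByDegreeLE n := by
  obtain ⟨p, hp, hpn, hpx⟩ := hx
  exact ⟨p, hp, hpn, by rw [map_smul, hpx, smul_zero]⟩

theorem exists_aeval_eq_zero_of_annihilatedByDegreeLE_eq_univ [Infinite K] {N : ℕ}
    (hN : f.annihilatedByDegreeLE N = Set.univ) : ∃ p : K[X], p ≠ 0 ∧ aeval f p = 0 := by
  have hdeg (y : M) : f.localMinpoly y ≠ 0 ∧ (f.localMinpoly y).natDegree ≤ N := by
    obtain ⟨p, hp, hpN, hpy⟩ := hN.symm ▸ Set.mem_univ y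
    exact ⟨localMinpoly_ne_zero hp hpy, (natDegree_localMinpoly_le hp hpy).trans hpN⟩
  have hbdd : BddAbove (Set.range fun y => (f.localMinpoly y).natDegree) :=
    ⟨N, Set.forall_mem_range.2 fun y => (hdeg y).2⟩
  obtain ⟨x, hx⟩ := Nat.sSup_mem (Set.range_nonempty _) hbdd
  exact ⟨f.localMinpoly x, (hdeg x).1, aeval_localMinpoly_eq_zero_of_forall_natDegree_le
    (fun y => (hdeg y).1) fun y => (le_csSup hbdd ⟨y, rfl⟩).trans_eq hx.symm⟩

section Normed

variable {𝕜 X : Type*} [NontriviallyNormedField 𝕜] [CompleteSpace 𝕜] [NormedAddCommGroup X]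
  [NormedSpace 𝕜 X] {f : Module.End 𝕜 X}

theorem isClosed_annihilatedByDegreeLE (hf : Continuous f) (n : ℕ) :
    IsClosed (f.annihilatedByDegreeLE n) := by
  have hpow : Continuous fun x => fun i : Fin (n + 1) => (f ^ (i : ℕ)) x :=
    continuous_pi fun i => by rw [coe_pow]; exact hf.iterate _
  have hpre : f.annihilatedByDegreeLE n =
      (fun x => fun i : Fin (n + 1) => (f ^ (i : ℕ)) x) ⁻¹' {v | LinearIndependent 𝕜 v}ᶜ :=
    Set.ext fun _ => not_linearIndependent_pow_apply_iff.symm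
  rw [hpre]
  exact isOpen_setOfPred_linearIndependent.isClosed_compl.preimage hpow

theorem exists_annihilatedByDegreeLE_eq_univ [CompleteSpace X] (hf : Continuous f)
    (h : ∀ x, ∃ p : 𝕜[X], p ≠ 0 ∧ aeval f p x = 0) :
    ∃ N, f.annihilatedByDegreeLE N = Set.univ := by
  have hcover : ⋃ n, f.annihilatedByDegreeLE n = Set.univ :=
    Set.iUnion_eq_univ_iff.2 fun x =>
      let ⟨p, hp, hpx⟩ := h x
      ⟨p.natDegree, p, hp, le_rfl, hpx⟩
  obtain ⟨n, x₀, hx₀⟩ := nonempty_interior_of_iUnion_of_closed (isClosed_annihilatedByDegreeLE hf)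
    hcover
  refine ⟨n + n, Set.eq_univ_of_forall fun y => ?_⟩
  have hlim : Tendsto (fun t : 𝕜 => x₀ + t • y) (𝓝[≠] 0) (𝓝 x₀) := by
    have : Continuous fun t : 𝕜 => x₀ + t • y := by fun_prop
    simpa using (this.tendsto 0).mono_left nhdsWithin_le_nhds
  obtain ⟨t, hmem, ht⟩ :=
    ((hlim.eventually (mem_interior_iff_mem_nhds.1 hx₀)).and self_mem_nhdsWithin).exists
  have := smul_mem_annihilatedByDegreeLE t⁻¹
    (sub_mem_annihilatedByDegreeLE hmem (interior_subset hx₀))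
  simpa [smul_smul, inv_mul_cancel₀ ht] using this

end Normed

end Module.End

/-- **Kaplansky's lemma for bounded operators.** If every vector is annihilated by
some nonzero polynomial in `T` (i.e. `T` is locally algebraic), then `T` is
algebraic: some nonzero polynomial in `T` is the zero operator. -/
theorem algebraic_of_locally_algebraic
    (X : Type*) [NormedAddCommGroup X] [NormedSpace ℂ X] [CompleteSpace X]
    (T : X →L[ℂ] X)
    (h : ∀ x : X, ∃ p : Polynomial ℂ, p ≠ 0 ∧ (Polynomial.aeval T p) x = 0) :
    ∃ p : Polynomial ℂ, p ≠ 0 ∧ Polynomial.aeval T p = 0 := by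
  have hT (p : ℂ[X]) (x : X) : aeval (T : Module.End ℂ X) p x = aeval T p x := by
    rw [← T.toLinearMap_aeval]; rfl
  obtain ⟨N, hN⟩ := Module.End.exists_annihilatedByDegreeLE_eq_univ T.continuous
    (by simpa only [hT] using h)
  obtain ⟨p, hp, hpT⟩ := Module.End.exists_aeval_eq_zero_of_annihilatedByDegreeLE_eq_univ hN
  refine ⟨p, hp, ContinuousLinearMap.ext fun x => ?_⟩
  rw [← hT, hpT, LinearMap.zero_apply, zero_apply]
end

section
/- Let W be a complex Banach space and A a bounded linear operator on W such that dim ker(A^n) = n for every natural number n ≥ 1. Let Z be the closed linear span of the union ⋃_{n≥1} ker(A^n). Then Z is an infinite-dimensional, separable, closed subspace of W that is invariant under A, and the restriction A|_Z : Z → Z has dense range. -/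
/-!
Since `ker A ⊆ ker A^(n+1)`, rank–nullity for `A` restricted to `ker A^(n+1)` gives
`dim A(ker A^(n+1)) = (n + 1) - 1 = dim ker A^n`, so `A` maps `ker A^(n+1)` onto `ker A^n`.
Hence `A` maps the span `S` of all these kernels onto itself, and its closure `Z` is invariant
with `A(Z) ⊇ S` dense in `Z`. `S` is a countable union of finite-dimensional spaces, hence
separable, and `Z ⊇ ker A^n` has dimension at least `n` for every `n`.
-/

open Module Set TopologicalSpace

theorem Submodule.finrank_map_add_finrank_ker_of_le {K V V₂ : Type*} [DivisionRing K]
    [AddCommGroup V] [Module K V] [AddCommGroup V₂] [Module K V₂] (f : V →ₗ[K] V₂)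
    {p : Submodule K V} [FiniteDimensional K p] (hp : LinearMap.ker f ≤ p) :
    finrank K (p.map f) + finrank K (LinearMap.ker f) = finrank K p := by
  have := (f.domRestrict p).finrank_range_add_finrank_ker
  rwa [LinearMap.range_domRestrict, LinearMap.ker_domRestrict,
    (Submodule.comapSubtypeEquivOfLe hp).finrank_eq] at this

theorem TopologicalSpace.IsSeparable.iSup_submodule {R M ι : Type*} [Semiring R]
    [TopologicalSpace R] [SeparableSpace R] [AddCommMonoid M] [Module R M] [TopologicalSpace M]
    [ContinuousAdd M] [ContinuousSMul R M] [Countable ι] {p : ι → Submodule R M} (hp : ∀ i, (p i).FG) :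
    IsSeparable ((⨆ i, p i : Submodule R M) : Set M) := by
  rw [Submodule.iSup_eq_span]
  refine (IsSeparable.iUnion fun i ↦ ?_).span
  obtain ⟨s, hs⟩ := hp i
  rw [← hs]
  exact s.finite_toSet.isSeparable.span

namespace Module.End

section Semiring

variable {R M : Type*} [Semiring R] [AddCommMonoid M] [Module R M] (f : End R M)

theorem map_ker_pow_succ_le (n : ℕ) :
    (LinearMap.ker (f ^ (n + 1))).map f ≤ LinearMap.ker (f ^ n) := by
  rintro _ ⟨x, hx, rfl⟩
  rw [LinearMap.mem_ker, ← mul_apply, ← pow_succ]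
  exact hx

theorem map_iSup_ker_pow_succ_le :
    (⨆ n, LinearMap.ker (f ^ (n + 1))).map f ≤ ⨆ n, LinearMap.ker (f ^ (n + 1)) := by
  rw [Submodule.map_iSup]
  exact iSup_mono fun n ↦ (map_ker_pow_succ_le f n).trans (f.iterateKer.monotone n.le_succ)

end Semiring

variable {K V : Type*} [DivisionRing K] [AddCommGroup V] [Module K V] (f : End K V)

theorem map_ker_pow_succ_eq {n : ℕ} [FiniteDimensional K (LinearMap.ker (f ^ (n + 1)))]
    (hn : finrank K (LinearMap.ker (f ^ (n + 1))) =
      finrank K (LinearMap.ker (f ^ n)) + finrank K (LinearMap.ker f)) :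
    (LinearMap.ker (f ^ (n + 1))).map f = LinearMap.ker (f ^ n) := by
  have hker : LinearMap.ker f ≤ LinearMap.ker (f ^ (n + 1)) := by
    simpa using f.iterateKer.monotone (Nat.le_add_left 1 n)
  have hdim := Submodule.finrank_map_add_finrank_ker_of_le f hker
  have hle : LinearMap.ker (f ^ n) ≤ LinearMap.ker (f ^ (n + 1)) :=
    f.iterateKer.monotone n.le_succ
  have : FiniteDimensional K (LinearMap.ker (f ^ n)) := Submodule.finiteDimensional_of_le hle
  exact Submodule.eq_of_le_of_finrank_le (map_ker_pow_succ_le f n) (by omega)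

theorem map_iSup_ker_pow_succ_eq (h : ∀ n, 1 ≤ n → finrank K (LinearMap.ker (f ^ n)) = n) :
    (⨆ n, LinearMap.ker (f ^ (n + 1))).map f = ⨆ n, LinearMap.ker (f ^ (n + 1)) := by
  refine (map_iSup_ker_pow_succ_le f).antisymm (iSup_le fun n ↦ ?_)
  have : FiniteDimensional K (LinearMap.ker (f ^ (n + 2))) :=
    Module.finite_of_finrank_pos (by rw [h _ (by omega)]; omega)
  have hker : finrank K (LinearMap.ker f) = 1 := pow_one f ▸ h 1 le_rfl
  rw [← map_ker_pow_succ_eq f (by rw [h _ (by omega), h _ (by omega), hker])]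
  exact Submodule.map_mono (le_iSup (fun n ↦ LinearMap.ker (f ^ (n + 1))) (n + 1))

end Module.End

theorem closed_span_of_kernels_invariant_dense_range_general
    (W : Type*) [NormedAddCommGroup W] [NormedSpace ℂ W]
    (A : W →L[ℂ] W)
    (h : ∀ n : ℕ, 1 ≤ n → Module.finrank ℂ (LinearMap.ker ((A ^ n : W →L[ℂ] W) : W →ₗ[ℂ] W)) = n)
    (Z : Submodule ℂ W)
    (hZ : Z = (Submodule.span ℂ
      (⋃ n : ℕ, ((LinearMap.ker ((A ^ (n + 1) : W →L[ℂ] W) : W →ₗ[ℂ] W) : Submodule ℂ W) : Set W))).topologicalClosure) :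
    IsClosed (Z : Set W) ∧
    ¬ FiniteDimensional ℂ Z ∧
    TopologicalSpace.IsSeparable (Z : Set W) ∧
    (∀ z ∈ Z, A z ∈ Z) ∧
    (Z : Set W) ⊆ closure (⇑A '' (Z : Set W)) := by
  set f : End ℂ W := (A : W →ₗ[ℂ] W)
  replace h : ∀ n, 1 ≤ n → finrank ℂ (LinearMap.ker (f ^ n)) = n :=
    fun n hn ↦ ContinuousLinearMap.toLinearMap_pow A n ▸ h n hn
  simp only [ContinuousLinearMap.toLinearMap_pow, ← Submodule.iSup_eq_span] at hZ
  set S := ⨆ n, LinearMap.ker (f ^ (n + 1))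
  have hAS : S.map f = S := Module.End.map_iSup_ker_pow_succ_eq f h
  have hZS : (Z : Set W) = closure S := by rw [hZ, Submodule.topologicalClosure_coe]
  refine ⟨hZ ▸ S.isClosed_topologicalClosure, fun hfin ↦ ?_, ?_, ?_, ?_⟩
  · have hle := Submodule.finrank_mono ((le_iSup (fun n ↦ LinearMap.ker (f ^ (n + 1)))
      (finrank ℂ Z)).trans (hZ ▸ S.le_topologicalClosure))
    rw [h _ (by omega)] at hle
    omega
  · rw [hZS]
    refine (IsSeparable.iSup_submodule fun n ↦ ?_).closure
    exact (Submodule.fg_iff_finiteDimensional _).2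
      (Module.finite_of_finrank_pos (by rw [h _ n.succ_pos]; omega))
  · have hmaps : MapsTo A S S := fun x hx ↦ hAS.le ⟨x, hx, rfl⟩
    show MapsTo A (Z : Set W) Z
    rw [hZS]
    exact hmaps.closure A.continuous
  · rw [hZS]
    calc closure (S : Set W) ⊆ closure (A '' S) := closure_mono fun x hx ↦ hAS.ge hx
      _ ⊆ closure (A '' closure S) := closure_mono (image_mono subset_closure)

/-- If `dim ker(Aⁿ) = n` for every `n ≥ 1`, then the closed linear span `Z` of
`⋃_{n ≥ 1} ker(Aⁿ)` is an infinite-dimensional, separable, closed subspace of `W`,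
invariant under `A`, and the restriction `A|_Z : Z → Z` has dense range. -/
theorem closed_span_of_kernels_invariant_dense_range
    (W : Type*) [NormedAddCommGroup W] [NormedSpace ℂ W] [CompleteSpace W]
    (A : W →L[ℂ] W)
    (h : ∀ n : ℕ, 1 ≤ n → Module.finrank ℂ (LinearMap.ker ((A ^ n : W →L[ℂ] W) : W →ₗ[ℂ] W)) = n)
    (Z : Submodule ℂ W)
    (hZ : Z = (Submodule.span ℂ
      (⋃ n : ℕ, ((LinearMap.ker ((A ^ (n + 1) : W →L[ℂ] W) : W →ₗ[ℂ] W) : Submodule ℂ W) : Set W))).topologicalClosure) :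
    IsClosed (Z : Set W) ∧
    ¬ FiniteDimensional ℂ Z ∧
    TopologicalSpace.IsSeparable (Z : Set W) ∧
    (∀ z ∈ Z, A z ∈ Z) ∧
    (Z : Set W) ⊆ closure (⇑A '' (Z : Set W)) :=
  closed_span_of_kernels_invariant_dense_range_general W A h Z hZ
end
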